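/- Let G be a graph in standard Cohen–Macaulay very well-covered form on {x_1,…,x_n,y_1,…,y_n}, and let G_3 = G ∖ {x_i, y_i : x_i ∈ N[x_n] ∪ N[y_n]} be the induced subgraph obtained by deleting all pairs x_i, y_i with x_i in the union of the closed neighborhoods of x_n and y_n. If D is a set of pairwise 3-disjoint edges of G_3, then D ∪ {x_n y_n} is a set of pairwise 3-disjoint edges of G. Consequently a(G) ≥ a(G_3) + 1. -/

import Mathlib

/-- `C` is a vertex cover of the graph `G`. -/
def IsVertexCover {V : Type*} (G : SimpleGraph V) (C : Finset V) : Prop :=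
  ∀ ⦃v w : V⦄, G.Adj v w → v ∈ C ∨ w ∈ C

/-- `C` is a minimal vertex cover of the graph `G`. -/
def IsMinVertexCover {V : Type*} (G : SimpleGraph V) (C : Finset V) : Prop :=
  IsVertexCover G C ∧ ∀ D ⊆ C, IsVertexCover G D → D = C

/-- `C` is an independent set of the graph `G`. -/
def IsIndepSet {V : Type*} (G : SimpleGraph V) (C : Finset V) : Prop :=
  ∀ ⦃v w : V⦄, v ∈ C → w ∈ C → ¬ G.Adj v w

/-- `C` is a maximal independent set of the graph `G`. -/
def IsMaxIndepSet {V : Type*} (G : SimpleGraph V) (C : Finset V) : Prop :=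
  IsIndepSet G C ∧ ∀ D, C ⊆ D → IsIndepSet G D → D = C

/-- A graph on the vertex set `{x_i, y_i : i ∈ ι}` (with `x_i = Sum.inl i` and
`y_i = Sum.inr i`) is in standard Cohen–Macaulay very well-covered form if it satisfies
conditions (i)–(v) of the Crupi–Rinaldo–Terai characterization. -/
def StdCMVWC {ι : Type*} [LinearOrder ι] [Fintype ι] (G : SimpleGraph (ι ⊕ ι)) : Prop :=
  IsMinVertexCover G (Finset.univ.image Sum.inl) ∧
  IsMaxIndepSet G (Finset.univ.image Sum.inr) ∧
  (∀ i : ι, G.Adj (Sum.inl i) (Sum.inr i)) ∧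
  (∀ i j : ι, G.Adj (Sum.inl i) (Sum.inr j) → i ≤ j) ∧
  (∀ i j : ι, G.Adj (Sum.inl i) (Sum.inr j) → ¬ G.Adj (Sum.inl i) (Sum.inl j)) ∧
  (∀ (i j k : ι) (z : ι ⊕ ι), (z = Sum.inl i ∨ z = Sum.inr i) →
    i ≠ j → j ≠ k → i ≠ k →
    G.Adj z (Sum.inl j) → G.Adj (Sum.inr j) (Sum.inl k) → G.Adj z (Sum.inl k))


/-- The subgraph of `G` obtained by deleting all vertices outside `S` (together with
their incident edges), viewed as a graph on the same vertex set. -/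
def restrictG {V : Type*} (G : SimpleGraph V) (S : Set V) : SimpleGraph V where
  Adj v w := G.Adj v w ∧ v ∈ S ∧ w ∈ S
  symm := ⟨fun v w h => ⟨h.1.symm, h.2.2, h.2.1⟩⟩
  loopless := ⟨fun v h => G.irrefl h.1⟩

/-- The vertex `x_n`. -/
def xnV (n : ℕ) : Fin (n + 1) ⊕ Fin (n + 1) := Sum.inl (Fin.last n)

/-- The vertex `y_n`. -/
def ynV (n : ℕ) : Fin (n + 1) ⊕ Fin (n + 1) := Sum.inr (Fin.last n)

/-- The indices `i` with `x_i ∈ N(x_n)`, i.e. `N(x_n) ∖ {y_n} = {x_{i_1},…,x_{i_t}}`. -/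
def nbrX (n : ℕ) (G : SimpleGraph (Fin (n + 1) ⊕ Fin (n + 1))) [DecidableRel G.Adj] :
    Finset (Fin (n + 1)) :=
  Finset.univ.filter fun i => G.Adj (Sum.inl i) (xnV n)

/-- The indices `i` with `x_i ∈ N(y_n)`, i.e. `N(y_n) ∖ {x_n} = {x_{j_1},…,x_{j_p}}`. -/
def nbrY (n : ℕ) (G : SimpleGraph (Fin (n + 1) ⊕ Fin (n + 1))) [DecidableRel G.Adj] :
    Finset (Fin (n + 1)) :=
  Finset.univ.filter fun i => G.Adj (Sum.inl i) (ynV n)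

/-- `G_1 = G ∖ {x_{i_1},y_{i_1},…,x_{i_t},y_{i_t},x_n,y_n}`. -/
def G₁ (n : ℕ) (G : SimpleGraph (Fin (n + 1) ⊕ Fin (n + 1))) [DecidableRel G.Adj] :
    SimpleGraph (Fin (n + 1) ⊕ Fin (n + 1)) :=
  restrictG G {v | Sum.elim id id v ∉ nbrX n G ∧ Sum.elim id id v ≠ Fin.last n}

/-- `G_2 = G ∖ {x_{j_1},y_{j_1},…,x_{j_p},y_{j_p},x_n,y_n}`. -/
def G₂ (n : ℕ) (G : SimpleGraph (Fin (n + 1) ⊕ Fin (n + 1))) [DecidableRel G.Adj] :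
    SimpleGraph (Fin (n + 1) ⊕ Fin (n + 1)) :=
  restrictG G {v | Sum.elim id id v ∉ nbrY n G ∧ Sum.elim id id v ≠ Fin.last n}

/-- `G_3 = G ∖ {x_i, y_i : x_i ∈ N[x_n] ∪ N[y_n]}`, the induced subgraph `G_1 ∩ G_2`. -/
def G₃ (n : ℕ) (G : SimpleGraph (Fin (n + 1) ⊕ Fin (n + 1))) [DecidableRel G.Adj] :
    SimpleGraph (Fin (n + 1) ⊕ Fin (n + 1)) :=
  restrictG G {v | Sum.elim id id v ∉ nbrX n G ∧ Sum.elim id id v ∉ nbrY n G ∧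
    Sum.elim id id v ≠ Fin.last n}

/-- Two edges `e, f` of `G` are 3-disjoint if the induced subgraph of `G` on their four
endpoints consists exactly of the two disjoint edges `e` and `f`. -/
def ThreeDisjoint {V : Type*} (G : SimpleGraph V) (e f : Sym2 V) : Prop :=
  ∀ a b c d : V, e = s(a, b) → f = s(c, d) →
    a ≠ c ∧ a ≠ d ∧ b ≠ c ∧ b ≠ d ∧
      ¬ G.Adj a c ∧ ¬ G.Adj a d ∧ ¬ G.Adj b c ∧ ¬ G.Adj b d

/-- `a(G)`: the maximum size of a set of pairwise 3-disjoint edges of `G`. -/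
noncomputable def aNum {V : Type*} [DecidableEq V] (G : SimpleGraph V) : ℕ :=
  sSup {k | ∃ D : Finset (Sym2 V), (∀ e ∈ D, e ∈ G.edgeSet) ∧
    (↑D : Set (Sym2 V)).Pairwise (ThreeDisjoint G) ∧ D.card = k}


/-!
Every vertex of `G₃` lies outside `N[x_n] ∪ N[y_n]`: for `x_i` this is how `G₃` is cut out,
and for `y_i` it follows from condition (iii) (`x_n y_i ∈ E` forces `i = n`) and the
independence of `Y`. Hence `x_n y_n` is 3-disjoint in `G` from every edge of `G₃`, and
3-disjointness inside an induced subgraph persists in `G`. So `x_n y_n` extends a maximum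
family of `G₃` to a family of `G` of size `a(G₃) + 1`.
-/

section ThreeDisjoint

variable {V : Type*} {G : SimpleGraph V}

def IsThreeDisjointEdgeSet (G : SimpleGraph V) (D : Finset (Sym2 V)) : Prop :=
  (∀ e ∈ D, e ∈ G.edgeSet) ∧ (↑D : Set (Sym2 V)).Pairwise (ThreeDisjoint G)

theorem ThreeDisjoint.symm {e f : Sym2 V} (h : ThreeDisjoint G e f) :
    ThreeDisjoint G f e := by
  intro a b c d hf he
  obtain ⟨hca, hda, hcb, hdb, nca, nda, ncb, ndb⟩ := h c d a b he hf
  exact ⟨hca.symm, hcb.symm, hda.symm, hdb.symm,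
    fun h => nca h.symm, fun h => ncb h.symm, fun h => nda h.symm, fun h => ndb h.symm⟩

theorem threeDisjoint_of_forall_mem {u v : V} {e : Sym2 V}
    (h : ∀ w ∈ e, u ≠ w ∧ v ≠ w ∧ ¬ G.Adj u w ∧ ¬ G.Adj v w) :
    ThreeDisjoint G s(u, v) e := by
  intro a b c d huv rfl
  obtain ⟨huc, hvc, nuc, nvc⟩ := h c (Sym2.mem_mk_left c d)
  obtain ⟨hud, hvd, nud, nvd⟩ := h d (Sym2.mem_mk_right c d)
  rcases Sym2.eq_iff.mp huv with ⟨rfl, rfl⟩ | ⟨rfl, rfl⟩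
  · exact ⟨huc, hud, hvc, hvd, nuc, nud, nvc, nvd⟩
  · exact ⟨hvc, hvd, huc, hud, nvc, nvd, nuc, nud⟩

theorem IsThreeDisjointEdgeSet.insert [DecidableEq V] {D : Finset (Sym2 V)}
    (hD : IsThreeDisjointEdgeSet G D)
    {u v : V} (huv : G.Adj u v)
    (h : ∀ e ∈ D, ∀ w ∈ e, u ≠ w ∧ v ≠ w ∧ ¬ G.Adj u w ∧ ¬ G.Adj v w) :
    IsThreeDisjointEdgeSet G (insert s(u, v) D) := by
  refine ⟨fun e he => ?_, ?_⟩
  · rcases Finset.mem_insert.mp he with rfl | he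
    exacts [huv, hD.1 e he]
  · rw [Finset.coe_insert, Set.pairwise_insert]
    exact ⟨hD.2, fun e he _ =>
      ⟨threeDisjoint_of_forall_mem (h e he), (threeDisjoint_of_forall_mem (h e he)).symm⟩⟩

theorem restrictG_le (S : Set V) : restrictG G S ≤ G := fun _ _ h => h.1

theorem mem_of_mem_edgeSet_restrictG {S : Set V} {e : Sym2 V}
    (he : e ∈ (restrictG G S).edgeSet) {v : V} (hv : v ∈ e) : v ∈ S := by
  induction e using Sym2.ind with
  | h a b =>
    obtain ⟨-, ha, hb⟩ := he
    rcases Sym2.mem_iff.mp hv with rfl | rfl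
    exacts [ha, hb]

theorem ThreeDisjoint.of_restrictG {S : Set V} {e f : Sym2 V}
    (he : e ∈ (restrictG G S).edgeSet) (hf : f ∈ (restrictG G S).edgeSet)
    (h : ThreeDisjoint (restrictG G S) e f) : ThreeDisjoint G e f := by
  intro a b c d rfl rfl
  obtain ⟨-, ha, hb⟩ := he
  obtain ⟨-, hc, hd⟩ := hf
  obtain ⟨hac, had, hbc, hbd, nac, nad, nbc, nbd⟩ := h a b c d rfl rfl
  exact ⟨hac, had, hbc, hbd, fun h => nac ⟨h, ha, hc⟩, fun h => nad ⟨h, ha, hd⟩,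
    fun h => nbc ⟨h, hb, hc⟩, fun h => nbd ⟨h, hb, hd⟩⟩

theorem IsThreeDisjointEdgeSet.of_restrictG {S : Set V} {D : Finset (Sym2 V)}
    (hD : IsThreeDisjointEdgeSet (restrictG G S) D) : IsThreeDisjointEdgeSet G D :=
  ⟨fun e he => SimpleGraph.edgeSet_mono (restrictG_le S) (hD.1 e he),
    fun _ he _ hf hef => (hD.2 he hf hef).of_restrictG (hD.1 _ he) (hD.1 _ hf)⟩

theorem bddAbove_card_isThreeDisjointEdgeSet [Fintype V] (G : SimpleGraph V) :
    BddAbove {k | ∃ D : Finset (Sym2 V), (∀ e ∈ D, e ∈ G.edgeSet) ∧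
      (↑D : Set (Sym2 V)).Pairwise (ThreeDisjoint G) ∧ D.card = k} := by
  refine ⟨Fintype.card (Sym2 V), ?_⟩
  rintro k ⟨D, -, -, rfl⟩
  exact D.card_le_univ

variable [Fintype V] [DecidableEq V]

theorem IsThreeDisjointEdgeSet.card_le_aNum {D : Finset (Sym2 V)}
    (hD : IsThreeDisjointEdgeSet G D) : D.card ≤ aNum G :=
  le_csSup (bddAbove_card_isThreeDisjointEdgeSet G) ⟨D, hD.1, hD.2, rfl⟩

theorem exists_isThreeDisjointEdgeSet_card_eq_aNum (G : SimpleGraph V) :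
    ∃ D, IsThreeDisjointEdgeSet G D ∧ D.card = aNum G := by
  obtain ⟨D, hE, hP, hcard⟩ :=
    Nat.sSup_mem (by exact ⟨0, ∅, by simp, by simp, rfl⟩)
      (bddAbove_card_isThreeDisjointEdgeSet G)
  exact ⟨D, ⟨hE, hP⟩, hcard⟩

end ThreeDisjoint

theorem StdCMVWC.ne_and_not_adj_last {n : ℕ} {G : SimpleGraph (Fin (n + 1) ⊕ Fin (n + 1))}
    [DecidableRel G.Adj] (hG : StdCMVWC G) {v : Fin (n + 1) ⊕ Fin (n + 1)}
    (hX : Sum.elim id id v ∉ nbrX n G) (hY : Sum.elim id id v ∉ nbrY n G)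
    (hlast : Sum.elim id id v ≠ Fin.last n) :
    xnV n ≠ v ∧ ynV n ≠ v ∧ ¬ G.Adj (xnV n) v ∧ ¬ G.Adj (ynV n) v := by
  obtain ⟨-, ⟨hYindep, -⟩, -, hupper, -, -⟩ := hG
  cases v with
  | inl i =>
    simp only [nbrX, nbrY, Finset.mem_filter, Finset.mem_univ, true_and, Sum.elim_inl,
      id] at hX hY hlast
    exact ⟨by simpa [xnV] using Ne.symm hlast, by simp [ynV],
      fun h => hX h.symm, fun h => hY h.symm⟩
  | inr i =>
    simp only [Sum.elim_inr, id] at hlast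
    exact ⟨by simp [xnV], by simpa [ynV] using Ne.symm hlast,
      fun h => hlast (le_antisymm (Fin.le_last i) (hupper _ _ h)),
      hYindep (by simp [ynV]) (by simp)⟩

/-- If `D` is a set of pairwise 3-disjoint edges of `G_3`, then `D ∪ {x_n y_n}` is a set
of pairwise 3-disjoint edges of `G`; consequently `a(G) ≥ a(G_3) + 1`. -/
theorem stmt9 (n : ℕ) (G : SimpleGraph (Fin (n + 1) ⊕ Fin (n + 1))) [DecidableRel G.Adj]
    (hG : StdCMVWC G) :
    (∀ D : Finset (Sym2 (Fin (n + 1) ⊕ Fin (n + 1))),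
      (∀ e ∈ D, e ∈ (G₃ n G).edgeSet) →
      (↑D : Set (Sym2 (Fin (n + 1) ⊕ Fin (n + 1)))).Pairwise (ThreeDisjoint (G₃ n G)) →
        (∀ e ∈ insert s(xnV n, ynV n) D, e ∈ G.edgeSet) ∧
        (↑(insert s(xnV n, ynV n) D) :
            Set (Sym2 (Fin (n + 1) ⊕ Fin (n + 1)))).Pairwise (ThreeDisjoint G)) ∧
    aNum (G₃ n G) + 1 ≤ aNum G := by
  have away : ∀ D, IsThreeDisjointEdgeSet (G₃ n G) D → ∀ e ∈ D, ∀ w ∈ e,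
      xnV n ≠ w ∧ ynV n ≠ w ∧ ¬ G.Adj (xnV n) w ∧ ¬ G.Adj (ynV n) w := by
    intro D hD e he w hw
    obtain ⟨hX, hY, hlast⟩ := mem_of_mem_edgeSet_restrictG (hD.1 e he) hw
    exact hG.ne_and_not_adj_last hX hY hlast
  have extend : ∀ D, IsThreeDisjointEdgeSet (G₃ n G) D →
      IsThreeDisjointEdgeSet G (insert s(xnV n, ynV n) D) := fun D hD =>
    hD.of_restrictG.insert (hG.2.2.1 (Fin.last n)) (away D hD)
  refine ⟨fun D hE hP => extend D ⟨hE, hP⟩, ?_⟩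
  obtain ⟨D, hD, hcard⟩ := exists_isThreeDisjointEdgeSet_card_eq_aNum (G₃ n G)
  have hnew : s(xnV n, ynV n) ∉ D := fun h => (away D hD _ h _ (Sym2.mem_mk_left _ _)).1 rfl
  calc aNum (G₃ n G) + 1 = (insert s(xnV n, ynV n) D).card := by
        rw [Finset.card_insert_of_notMem hnew, hcard]
    _ ≤ aNum G := (extend D hD).card_le_aNum
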